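/- arXiv:1402.5003 — 11 statements merged into one kernel-verified Lean document; each statement's English description precedes it below -/
import Mathlib

section
/- Let (V, f) be a finite decay space and let C > 0 and 0 ≤ A < 1 be constants such that for every point x ∈ V, every radius ρ > 0 and every q ≥ 1, every subset Y of the ball {y ∈ V : f(y,x) < ρ} satisfying f(y,y') ≥ 2ρ/q for all distinct y, y' ∈ Y has |Y| ≤ C·q^A. Then for every r > 0, every subset S ⊆ V with f(y,y') ≥ r for all distinct y, y' ∈ S, and every x ∈ S, one has Σ_{y ∈ S, y ≠ x} 1/f(y,x) ≤ C·2^{A+1}·(Z(2−A) − 1)/r, where Z(s) = Σ_{n≥1} n^{−s} (this series converges since 2 − A > 1). -/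
open Finset

private lemma telescope_key (n : ℕ) (hn : 1 ≤ n) :
    HasSum (fun k : ℕ => (1:ℝ) / (((n:ℝ) + k) * ((n:ℝ) + k + 1))) (1 / n) := by
  have hnpos : (1:ℝ) ≤ (n:ℝ) := by exact_mod_cast hn
  rw [hasSum_iff_tendsto_nat_of_nonneg (fun k => by positivity)]
  have hps : ∀ N : ℕ, ∑ k ∈ Finset.range N, (1:ℝ) / (((n:ℝ) + k) * ((n:ℝ) + k + 1))
      = 1 / (n:ℝ) - 1 / ((n:ℝ) + N) := by
    intro N
    have h := Finset.sum_range_sub' (fun k : ℕ => 1 / ((n:ℝ) + k)) N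
    simp only [Nat.cast_zero, add_zero] at h
    rw [← h]
    apply Finset.sum_congr rfl
    intro k _
    have h1 : (0:ℝ) < (n:ℝ) + k := by positivity
    have h2 : (0:ℝ) < (n:ℝ) + k + 1 := by positivity
    push_cast
    push_cast
    rw [div_sub_div _ _ (ne_of_gt h1) (by push_cast at h2 ⊢; linarith : (↑n + (↑k + 1) : ℝ) ≠ 0)]
    rw [div_eq_div_iff (by positivity) (by positivity)]
    ring
  simp only [hps]
  have : Filter.Tendsto (fun N : ℕ => 1 / ((n:ℝ) + N)) Filter.atTop (nhds 0) := by
    simp only [one_div]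
    exact Filter.Tendsto.comp tendsto_inv_atTop_zero
      (Filter.tendsto_atTop_add_const_left _ _ tendsto_natCast_atTop_atTop)
  simpa using Filter.Tendsto.const_sub (1 / (n:ℝ)) this

private lemma telescope_ind (n : ℕ) (hn : 1 ≤ n) :
    HasSum (fun m : ℕ => if n ≤ m + 1 then 1 / (((m:ℝ) + 1) * ((m:ℝ) + 2)) else 0)
      (1 / n) := by
  obtain ⟨n', rfl⟩ : ∃ n', n = n' + 1 := ⟨n - 1, by omega⟩
  set g : ℕ → ℝ := fun m => if n' + 1 ≤ m + 1 then 1 / (((m:ℝ) + 1) * ((m:ℝ) + 2)) else 0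
    with hg
  have hinj : Function.Injective (fun k : ℕ => n' + k) := by
    intro a b hab; simpa using hab
  have hzero : ∀ m : ℕ, m ∉ Set.range (fun k : ℕ => n' + k) → g m = 0 := by
    intro m hm
    have hlt : ¬ (n' + 1 ≤ m + 1) := by
      intro h
      exact hm ⟨m - n', show n' + (m - n') = m by omega⟩
    simp only [hg, if_neg hlt]
  rw [← Function.Injective.hasSum_iff hinj hzero]
  have hcomp : (g ∘ fun k : ℕ => n' + k) =
      fun k : ℕ => (1:ℝ) / (((((n'+1:ℕ)):ℝ) + k) * ((((n'+1:ℕ)):ℝ) + k + 1)) := by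
    funext k
    simp only [Function.comp, hg, if_pos (by omega : n' + 1 ≤ n' + k + 1)]
    push_cast
    ring_nf
  rw [hcomp]
  exact telescope_key (n' + 1) (by omega)



/-- **Annulus argument / fading parameter bound.**
Let `(V, f)` be a finite decay space and `C > 0`, `0 ≤ A < 1` constants such that for
every point `x ∈ V`, radius `ρ > 0` and `q ≥ 1`, every subset `Y` of the ball
`{y | f y x < ρ}` that is pairwise `2ρ/q`-separated has `|Y| ≤ C·q^A`.  Then for every
`r > 0`, every `r`-separated subset `S ⊆ V`, and every `x ∈ S`,
`Σ_{y ∈ S, y ≠ x} 1/f(y,x) ≤ C·2^{A+1}·(Z(2−A) − 1)/r` where `Z(s) = Σ_{n ≥ 1} n^{−s}`. -/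
theorem stmt_0
    {V : Type*} [Fintype V] [DecidableEq V]
    (f : V → V → ℝ)
    (hf_nonneg : ∀ p q : V, 0 ≤ f p q)
    (hf_zero : ∀ p q : V, f p q = 0 ↔ p = q)
    (C A : ℝ) (hC : 0 < C) (hA0 : 0 ≤ A) (hA1 : A < 1)
    (hpack : ∀ (x : V) (ρ q : ℝ), 0 < ρ → 1 ≤ q →
      ∀ Y : Finset V, (∀ y ∈ Y, f y x < ρ) →
        (∀ y ∈ Y, ∀ y' ∈ Y, y ≠ y' → 2 * ρ / q ≤ f y y') →
        (Y.card : ℝ) ≤ C * q ^ A)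
    (r : ℝ) (hr : 0 < r)
    (S : Finset V)
    (hsep : ∀ y ∈ S, ∀ y' ∈ S, y ≠ y' → r ≤ f y y')
    (x : V) (hx : x ∈ S) :
    ∑ y ∈ S.erase x, 1 / f y x ≤
      C * 2 ^ (A + 1) * ((∑' n : ℕ, ((n : ℝ) + 1) ^ (-(2 - A))) - 1) / r := by
  classical
  set T := S.erase x with hT
  have hfr : ∀ y ∈ T, r ≤ f y x := by
    intro y hy
    exact hsep y (Finset.mem_of_mem_erase hy) x hx (Finset.ne_of_mem_erase hy)
  set nn : V → ℕ := fun y => ⌊f y x / r⌋₊ with hnn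
  have hnn1 : ∀ y ∈ T, 1 ≤ nn y := by
    intro y hy
    have h1 : (1:ℝ) ≤ f y x / r := (one_le_div hr).2 (hfr y hy)
    exact Nat.le_floor (by exact_mod_cast h1)
  have hnle : ∀ y ∈ T, (nn y : ℝ) * r ≤ f y x := by
    intro y hy
    have h0 : (0:ℝ) ≤ f y x / r := div_nonneg (hf_nonneg y x) hr.le
    have := Nat.floor_le h0
    calc (nn y : ℝ) * r ≤ (f y x / r) * r := by
          exact mul_le_mul_of_nonneg_right this hr.le
      _ = f y x := div_mul_cancel₀ _ hr.ne'
  -- the indicator functions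
  set h : V → ℕ → ℝ := fun y m =>
    if nn y ≤ m + 1 then 1 / (((m:ℝ) + 1) * ((m:ℝ) + 2)) else 0 with hh
  have hsum : ∀ y ∈ T, HasSum (h y) (1 / (nn y : ℝ)) := fun y hy =>
    telescope_ind (nn y) (hnn1 y hy)
  -- the counting function
  set F : ℕ → ℝ := fun m => ∑ y ∈ T, h y m with hF
  have hFsummable : Summable F := summable_sum (fun y hy => (hsum y hy).summable)
  -- card bound
  have hcard : ∀ m : ℕ,
      ((T.filter (fun y => nn y ≤ m + 1)).card : ℝ) ≤ C * (2 * ((m:ℝ) + 2)) ^ A := by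
    intro m
    apply hpack x (((m:ℝ) + 2) * r) (2 * ((m:ℝ) + 2)) (by positivity)
      (by nlinarith [Nat.cast_nonneg (α := ℝ) m])
    · intro y hy
      rw [Finset.mem_filter] at hy
      have hfloor : nn y < m + 2 := by omega
      have := (Nat.floor_lt (div_nonneg (hf_nonneg y x) hr.le)).1 hfloor
      have h2 : f y x / r < (m:ℝ) + 2 := by push_cast at this; linarith
      calc f y x = (f y x / r) * r := (div_mul_cancel₀ _ hr.ne').symm
        _ < ((m:ℝ) + 2) * r := by exact mul_lt_mul_of_pos_right h2 hr
    · intro y hy y' hy' hne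
      rw [Finset.mem_filter] at hy hy'
      have : 2 * (((m:ℝ) + 2) * r) / (2 * ((m:ℝ) + 2)) = r := by
        rw [div_eq_iff (by positivity)]; ring
      rw [this]
      exact hsep y (Finset.mem_of_mem_erase hy.1) y' (Finset.mem_of_mem_erase hy'.1) hne
  -- F m in closed form and bound
  have hFeq : ∀ m : ℕ, F m =
      ((T.filter (fun y => nn y ≤ m + 1)).card : ℝ) * (1 / (((m:ℝ) + 1) * ((m:ℝ) + 2))) := by
    intro m
    rw [hF]
    simp only [hh]
    rw [Finset.sum_ite, Finset.sum_const, Finset.sum_const_zero, add_zero, nsmul_eq_mul]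
  set G : ℕ → ℝ := fun m => C * 2 ^ (A + 1) * ((m:ℝ) + 2) ^ (A - 2) with hG
  have hGsummable : Summable G := by
    apply Summable.mul_left
    have hbase : Summable (fun n : ℕ => (n:ℝ) ^ (A - 2)) :=
      Real.summable_nat_rpow.2 (by linarith)
    have := (summable_nat_add_iff 2).2 hbase
    apply this.congr
    intro m
    congr 1
    push_cast
    ring
  have hFG : ∀ m : ℕ, F m ≤ G m := by
    intro m
    rw [hFeq m]
    show _ ≤ C * 2 ^ (A + 1) * ((m:ℝ) + 2) ^ (A - 2)
    have hm2 : (0:ℝ) < (m:ℝ) + 2 := by positivity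
    have hm1 : (0:ℝ) < (m:ℝ) + 1 := by positivity
    have hrpow : (2 * ((m:ℝ) + 2)) ^ A = 2 ^ A * ((m:ℝ) + 2) ^ A :=
      Real.mul_rpow (by norm_num) hm2.le
    have key : ((m:ℝ) + 2) ^ (A - 2) = ((m:ℝ) + 2) ^ A / (((m:ℝ) + 2) * ((m:ℝ) + 2)) := by
      rw [Real.rpow_sub hm2]
      congr 1
      rw [show (2:ℝ) = ((2:ℕ):ℝ) by norm_num, Real.rpow_natCast]
      ring
    have h2pow : (2:ℝ) ^ (A + 1) = 2 ^ A * 2 := by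
      rw [Real.rpow_add (by norm_num), Real.rpow_one]
    rw [key, h2pow]
    have hcb := hcard m
    have hApos : (0:ℝ) < ((m:ℝ) + 2) ^ A := Real.rpow_pos_of_pos hm2 A
    have h2Apos : (0:ℝ) < (2:ℝ) ^ A := Real.rpow_pos_of_pos (by norm_num) A
    rw [hrpow] at hcb
    calc ((T.filter (fun y => nn y ≤ m + 1)).card : ℝ) * (1 / (((m:ℝ) + 1) * ((m:ℝ) + 2)))
        ≤ (C * (2 ^ A * ((m:ℝ) + 2) ^ A)) * (1 / (((m:ℝ) + 1) * ((m:ℝ) + 2))) := by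
          apply mul_le_mul_of_nonneg_right hcb
          positivity
      _ ≤ (C * (2 ^ A * ((m:ℝ) + 2) ^ A)) * (2 / (((m:ℝ) + 2) * ((m:ℝ) + 2))) := by
          apply mul_le_mul_of_nonneg_left _ (by positivity)
          rw [div_le_div_iff₀ (by positivity) (by positivity)]
          nlinarith
      _ = C * (2 ^ A * 2) * (((m:ℝ) + 2) ^ A / (((m:ℝ) + 2) * ((m:ℝ) + 2))) := by
          ring
  -- sum over T
  have step1 : ∑ y ∈ T, 1 / f y x ≤ ∑ y ∈ T, 1 / ((nn y : ℝ) * r) := by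
    apply Finset.sum_le_sum
    intro y hy
    apply one_div_le_one_div_of_le
    · have h1 := hnn1 y hy
      have : (1:ℝ) ≤ (nn y : ℝ) := by exact_mod_cast h1
      nlinarith
    · exact hnle y hy
  have step2 : ∑ y ∈ T, 1 / ((nn y : ℝ) * r) = (∑ y ∈ T, 1 / (nn y : ℝ)) / r := by
    rw [Finset.sum_div]
    apply Finset.sum_congr rfl
    intro y _
    rw [div_div]
  have step3 : ∑ y ∈ T, 1 / (nn y : ℝ) = ∑' m, F m := by
    have he : (∑' m, F m) = ∑ y ∈ T, ∑' m, h y m :=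
      Summable.tsum_finsetSum (fun y hy => (hsum y hy).summable)
    rw [he]
    exact Finset.sum_congr rfl fun y hy => ((hsum y hy).tsum_eq).symm
  have step4 : ∑' m, F m ≤ ∑' m, G m := Summable.tsum_le_tsum hFG hFsummable hGsummable
  -- compute ∑' G
  have hZsummable : Summable (fun n : ℕ => ((n:ℝ) + 1) ^ (-(2 - A))) := by
    have hbase : Summable (fun n : ℕ => (n:ℝ) ^ (-(2 - A))) :=
      Real.summable_nat_rpow.2 (by linarith)
    have := (summable_nat_add_iff 1).2 hbase
    apply this.congr
    intro m
    congr 1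
    push_cast
    ring
  have step5 : ∑' m, G m =
      C * 2 ^ (A + 1) * ((∑' n : ℕ, ((n : ℝ) + 1) ^ (-(2 - A))) - 1) := by
    rw [hG, tsum_mul_left]
    congr 1
    rw [Summable.tsum_eq_zero_add hZsummable]
    push_cast
    rw [show (0:ℝ) + 1 = 1 by ring, Real.one_rpow]
    rw [show (1:ℝ) + (∑' m : ℕ, ((m:ℝ) + 1 + 1) ^ (-(2 - A))) - 1
      = ∑' m : ℕ, ((m:ℝ) + 1 + 1) ^ (-(2 - A)) by ring]
    apply tsum_congr
    intro m
    rw [show (m:ℝ) + 1 + 1 = (m:ℝ) + 2 by ring, show -(2 - A) = A - 2 by ring]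
  -- combine
  have final : ∑ y ∈ T, 1 / f y x ≤
      C * 2 ^ (A + 1) * ((∑' n : ℕ, ((n : ℝ) + 1) ^ (-(2 - A))) - 1) / r := by
    calc ∑ y ∈ T, 1 / f y x ≤ ∑ y ∈ T, 1 / ((nn y : ℝ) * r) := step1
      _ = (∑ y ∈ T, 1 / (nn y : ℝ)) / r := step2
      _ = (∑' m, F m) / r := by rw [step3]
      _ ≤ (∑' m, G m) / r := by gcongr
      _ = _ := by rw [step5]
  exact final
end

section
/- Let (V, f) be a finite symmetric decay space with metricity at most ζ, where ζ ≥ 1, let β ≥ 1, and let S be a finite set of links whose senders and receivers are pairwise distinct points of V. Assume S is (e²/β)-feasible under uniform power with zero noise, i.e., Σ_{l_w ∈ S, w ≠ v} β·f_vv/f_wv ≤ β/e² for every l_v ∈ S. Then S is (1/ζ)-separated: for all distinct l_v, l_w ∈ S, min(d(s_v,r_w), d(s_w,r_v), d(s_v,s_w), d(r_v,r_w)) ≥ (1/ζ)·max(d_vv, d_ww), where d(p,q) = f(p,q)^{1/ζ} and d_vv = d(s_v,r_v). -/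
/-- **Feasible uniform-power sets are `1/ζ`-separated.**
In a finite symmetric decay space with metricity at most `ζ ≥ 1`, if a set `S` of links
(with all senders and receivers pairwise distinct) is `(e²/β)`-feasible under uniform
power with zero noise, then `S` is `1/ζ`-separated: for all distinct links `l_v, l_w ∈ S`,
`min(d(s_v,r_w), d(s_w,r_v), d(s_v,s_w), d(r_v,r_w)) ≥ (1/ζ)·max(d_vv, d_ww)`,
where `d(p,q) = f(p,q)^{1/ζ}`. -/
theorem stmt_1
    {V : Type*} [Fintype V]
    (f : V → V → ℝ)
    (hf_nonneg : ∀ p q : V, 0 ≤ f p q)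
    (hf_zero : ∀ p q : V, f p q = 0 ↔ p = q)
    (hf_symm : ∀ p q : V, f p q = f q p)
    (ζ : ℝ) (hζ : 1 ≤ ζ)
    (hmetricity : ∀ x y z : V, f x y ^ (1/ζ) ≤ f x z ^ (1/ζ) + f z y ^ (1/ζ))
    (β : ℝ) (hβ : 1 ≤ β)
    {ι : Type*} [DecidableEq ι] (s r : ι → V) (S : Finset ι)
    (hdistinct_ss : ∀ v ∈ S, ∀ w ∈ S, v ≠ w → s v ≠ s w)
    (hdistinct_rr : ∀ v ∈ S, ∀ w ∈ S, v ≠ w → r v ≠ r w)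
    (hdistinct_sr : ∀ v ∈ S, ∀ w ∈ S, s v ≠ r w)
    (hfeas : ∀ v ∈ S, ∑ w ∈ S.erase v, β * f (s v) (r v) / f (s w) (r v)
        ≤ β / Real.exp 1 ^ 2) :
    ∀ v ∈ S, ∀ w ∈ S, v ≠ w →
      (1/ζ) * max (f (s v) (r v) ^ (1/ζ)) (f (s w) (r w) ^ (1/ζ)) ≤
        min (min (f (s v) (r w) ^ (1/ζ)) (f (s w) (r v) ^ (1/ζ)))
            (min (f (s v) (s w) ^ (1/ζ)) (f (r v) (r w) ^ (1/ζ))) := by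
  have hζ0 : (0:ℝ) < ζ := lt_of_lt_of_le one_pos hζ
  have hk0 : (0:ℝ) < 1/ζ := by positivity
  have hβ0 : (0:ℝ) < β := lt_of_lt_of_le one_pos hβ
  have hE : (0:ℝ) < Real.exp 1 ^ 2 := pow_pos (Real.exp_pos 1) 2
  -- Key: for distinct v, w in S, d(s_w, r_v) ≥ (1 + 2/ζ) · d_vv
  have key : ∀ v ∈ S, ∀ w ∈ S, v ≠ w →
      (1 + 2 * (1/ζ)) * f (s v) (r v) ^ (1/ζ) ≤ f (s w) (r v) ^ (1/ζ) := by
    intro v hv w hw hvw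
    have hwv : 0 < f (s w) (r v) := by
      rcases lt_or_eq_of_le (hf_nonneg (s w) (r v)) with h | h
      · exact h
      · exact absurd ((hf_zero _ _).mp h.symm) (hdistinct_sr w hw v hv)
    have hterm : β * f (s v) (r v) / f (s w) (r v) ≤ β / Real.exp 1 ^ 2 := by
      refine le_trans ?_ (hfeas v hv)
      refine Finset.single_le_sum (f := fun u => β * f (s v) (r v) / f (s u) (r v))
        ?_ (Finset.mem_erase.mpr ⟨hvw.symm, hw⟩)
      intro i _
      exact div_nonneg (mul_nonneg hβ0.le (hf_nonneg _ _)) (hf_nonneg _ _)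
    have hfE : Real.exp 1 ^ 2 * f (s v) (r v) ≤ f (s w) (r v) := by
      rw [div_le_div_iff₀ hwv hE] at hterm
      nlinarith [hf_nonneg (s v) (r v)]
    have h1 : (Real.exp 1 ^ 2 * f (s v) (r v)) ^ (1/ζ) ≤ f (s w) (r v) ^ (1/ζ) :=
      Real.rpow_le_rpow (mul_nonneg hE.le (hf_nonneg _ _)) hfE hk0.le
    have h2 : (Real.exp 1 ^ 2 * f (s v) (r v)) ^ (1/ζ)
        = Real.exp (2 * (1/ζ)) * f (s v) (r v) ^ (1/ζ) := by
      rw [Real.mul_rpow hE.le (hf_nonneg _ _)]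
      congr 1
      rw [show Real.exp 1 ^ 2 = Real.exp 2 by rw [sq, ← Real.exp_add]; norm_num,
        ← Real.exp_mul]
    rw [h2] at h1
    have h3 : 2 * (1/ζ) + 1 ≤ Real.exp (2 * (1/ζ)) := Real.add_one_le_exp _
    nlinarith [Real.rpow_nonneg (hf_nonneg (s v) (r v)) (1/ζ)]
  intro v hv w hw hvw
  set k : ℝ := 1/ζ with hkdef
  set dvv := f (s v) (r v) ^ k with hdvv
  set dww := f (s w) (r w) ^ k with hdww
  set a := f (s v) (r w) ^ k with hadef
  set b := f (s w) (r v) ^ k with hbdef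
  set c := f (s v) (s w) ^ k with hcdef
  set g := f (r v) (r w) ^ k with hgdef
  have h0vv : 0 ≤ dvv := Real.rpow_nonneg (hf_nonneg _ _) k
  have h0ww : 0 ≤ dww := Real.rpow_nonneg (hf_nonneg _ _) k
  have h0a : 0 ≤ a := Real.rpow_nonneg (hf_nonneg _ _) k
  have h0b : 0 ≤ b := Real.rpow_nonneg (hf_nonneg _ _) k
  have h0c : 0 ≤ c := Real.rpow_nonneg (hf_nonneg _ _) k
  have h0g : 0 ≤ g := Real.rpow_nonneg (hf_nonneg _ _) k
  have hb : (1 + 2 * k) * dvv ≤ b := key v hv w hw hvw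
  have ha : (1 + 2 * k) * dww ≤ a := key w hw v hv hvw.symm
  -- triangle inequalities
  have t1 : b ≤ c + dvv := by
    have := hmetricity (s w) (r v) (s v)
    rwa [hf_symm (s w) (s v)] at this
  have t2 : a ≤ c + dww := hmetricity (s v) (r w) (s w)
  have t3 : b ≤ dww + g := by
    have := hmetricity (s w) (r v) (r w)
    rwa [hf_symm (r w) (r v)] at this
  have t4 : a ≤ dvv + g := hmetricity (s v) (r w) (r v)
  have t6 : g ≤ dvv + a := by
    have := hmetricity (r v) (r w) (s v)
    rwa [hf_symm (r v) (s v)] at this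
  have t7 : g ≤ b + dww := by
    have := hmetricity (r v) (r w) (s w)
    rwa [hf_symm (r v) (s w)] at this
  have hkvv : 0 ≤ k * dvv := mul_nonneg hk0.le h0vv
  have hkww : 0 ≤ k * dww := mul_nonneg hk0.le h0ww
  have hmax : k * max dvv dww = max (k * dvv) (k * dww) := mul_max_of_nonneg _ _ hk0.le
  have hdvvb : dvv ≤ b := by linarith
  have hdwwa : dww ≤ a := by linarith
  rw [hmax]
  refine le_min (le_min (max_le ?_ ?_) (max_le ?_ ?_)) (le_min (max_le ?_ ?_) (max_le ?_ ?_))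
  · -- k·dvv ≤ a
    linarith
  · -- k·dww ≤ a
    linarith
  · -- k·dvv ≤ b
    linarith
  · -- k·dww ≤ b
    linarith
  · -- k·dvv ≤ c
    linarith
  · -- k·dww ≤ c
    linarith
  · -- k·dvv ≤ g
    linarith
  · -- k·dww ≤ g
    linarith
end

section
/- Let (V, f) be a finite symmetric decay space with metricity at most ζ ≥ 1 and quasi-distance d(p,q) = f(p,q)^{1/ζ}, and suppose there are constants C > 0 and A' ≥ 0 such that for every x ∈ V, ρ > 0 and q ≥ 1, every subset Y of {y ∈ V : d(y,x) < ρ} with pairwise quasi-distances at least 2ρ/q has |Y| ≤ C·q^{A'}. Let τ, η > 0, let S be a τ-separated set of links, and let l_v be any link with quasi-length ℓ = d(s_v,r_v) > 0. Then the number of links l_w ∈ S with d(s_w,r_w) ≥ ℓ and d(r_w, r_v) ≤ η·ℓ is at most C·((2η+τ)/τ)^{A'}. -/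
/-- **Packing bound for τ-separated link sets in doubling decay spaces.**
Let `(V,f)` be a finite symmetric decay space with metricity at most `ζ ≥ 1` and
quasi-distance `d(p,q) = f(p,q)^{1/ζ}`, whose quasi-distance satisfies the doubling
(bounded Assouad dimension) packing property with constants `C > 0`, `A' ≥ 0`.
If `S` is a `τ`-separated set of links and `l_v` is a link with quasi-length `ℓ > 0`,
then the number of links `l_w ∈ S` with `d(s_w,r_w) ≥ ℓ` and `d(r_w,r_v) ≤ η·ℓ`
is at most `C·((2η+τ)/τ)^{A'}`. -/
theorem stmt_2
    {V : Type*} [Fintype V]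
    (f : V → V → ℝ)
    (hf_nonneg : ∀ p q : V, 0 ≤ f p q)
    (hf_zero : ∀ p q : V, f p q = 0 ↔ p = q)
    (hf_symm : ∀ p q : V, f p q = f q p)
    (ζ : ℝ) (hζ : 1 ≤ ζ)
    (hmetricity : ∀ x y z : V, f x y ^ (1/ζ) ≤ f x z ^ (1/ζ) + f z y ^ (1/ζ))
    (C A' : ℝ) (hC : 0 < C) (hA' : 0 ≤ A')
    (hpack : ∀ (x : V) (ρ q : ℝ), 0 < ρ → 1 ≤ q →
      ∀ Y : Finset V, (∀ y ∈ Y, f y x ^ (1/ζ) < ρ) →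
        (∀ y ∈ Y, ∀ y' ∈ Y, y ≠ y' → 2 * ρ / q ≤ f y y' ^ (1/ζ)) →
        (Y.card : ℝ) ≤ C * q ^ A')
    (τ η : ℝ) (hτ : 0 < τ) (hη : 0 < η)
    {ι : Type*} [DecidableEq ι] (s r : ι → V) (S : Finset ι)
    (hsep : ∀ v ∈ S, ∀ w ∈ S, v ≠ w →
      τ * max (f (s v) (r v) ^ (1/ζ)) (f (s w) (r w) ^ (1/ζ)) ≤
        min (min (f (s v) (r w) ^ (1/ζ)) (f (s w) (r v) ^ (1/ζ)))
            (min (f (s v) (s w) ^ (1/ζ)) (f (r v) (r w) ^ (1/ζ))))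
    (v : ι) (ℓ : ℝ) (hℓ : ℓ = f (s v) (r v) ^ (1/ζ)) (hℓpos : 0 < ℓ) :
    (((S.filter (fun w => ℓ ≤ f (s w) (r w) ^ (1/ζ) ∧
        f (r w) (r v) ^ (1/ζ) ≤ η * ℓ)).card : ℝ)) ≤ C * ((2*η + τ)/τ) ^ A' := by
  classical
  have hζ0 : (1/ζ : ℝ) ≠ 0 := by positivity
  set q : ℝ := (2*η + τ)/τ with hqdef
  have hq1 : 1 ≤ q := by
    rw [hqdef, le_div_iff₀ hτ]; linarith
  set ρ : ℝ := (η + τ/2) * ℓ with hρdef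
  have hρpos : 0 < ρ := by positivity
  set T := S.filter (fun w => ℓ ≤ f (s w) (r w) ^ (1/ζ) ∧
      f (r w) (r v) ^ (1/ζ) ≤ η * ℓ) with hT
  have hmemT : ∀ w ∈ T, w ∈ S ∧ ℓ ≤ f (s w) (r w) ^ (1/ζ) ∧
      f (r w) (r v) ^ (1/ζ) ≤ η * ℓ := by
    intro w hw; simpa [hT] using Finset.mem_filter.mp hw
  have hsepT : ∀ w ∈ T, ∀ w' ∈ T, w ≠ w' → τ * ℓ ≤ f (r w) (r w') ^ (1/ζ) := by
    intro w hw w' hw' hne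
    obtain ⟨hwS, hwl, _⟩ := hmemT w hw
    obtain ⟨hw'S, hw'l, _⟩ := hmemT w' hw'
    have h := hsep w hwS w' hw'S hne
    have h1 : τ * ℓ ≤ τ * max (f (s w) (r w) ^ (1/ζ)) (f (s w') (r w') ^ (1/ζ)) :=
      mul_le_mul_of_nonneg_left (le_max_of_le_left hwl) hτ.le
    calc τ * ℓ ≤ _ := h1
      _ ≤ _ := h
      _ ≤ f (r w) (r w') ^ (1/ζ) := (min_le_right _ _).trans (min_le_right _ _)
  have hinj : Set.InjOn r T := by
    intro w hw w' hw' hrw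
    by_contra hne
    have h := hsepT w hw w' hw' hne
    have h0 : f (r w) (r w') ^ (1/ζ) = 0 := by
      rw [(hf_zero _ _).mpr (by rw [hrw]), Real.zero_rpow hζ0]
    nlinarith
  have hcard : (T.card : ℝ) = ((T.image r).card : ℝ) := by
    rw [Finset.card_image_of_injOn hinj]
  rw [hcard]
  have h2ρq : 2 * ρ / q = τ * ℓ := by
    rw [hρdef, hqdef]; field_simp
  apply hpack (r v) ρ q hρpos hq1
  · intro y hy
    obtain ⟨w, hw, rfl⟩ := Finset.mem_image.mp hy
    have := (hmemT w hw).2.2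
    have : f (r w) (r v) ^ (1/ζ) ≤ η * ℓ := this
    nlinarith
  · intro y hy y' hy' hne
    obtain ⟨w, hw, rfl⟩ := Finset.mem_image.mp hy
    obtain ⟨w', hw', rfl⟩ := Finset.mem_image.mp hy'
    rw [h2ρq]
    exact hsepT w hw w' hw' (fun h => hne (by rw [h]))
end

section
/- Let (V, f) be a finite symmetric decay space with metricity at most ζ > 0 and quasi-distance d(p,q) = f(p,q)^{1/ζ}. Let l_u = (s_u, r_u) and l_w = (s_w, r_w) be links with all cross decays positive, let c_u, c_w > 0 be constants with c_u ≤ c_w, and suppose d(s_u,r_u) ≤ d(s_w,r_w) and d(s_w, r_u) ≥ (ζ/2)·d(s_w,r_w). Then c_u·f(s_u,r_u)/f(s_w,r_u) ≤ e⁴·c_w·f(s_w,r_w)/f(s_u,r_w); that is, the affectance of l_w on l_u is at most e⁴ times the affectance of l_u on l_w. -/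
/-- **Affectance swapping.**
In a finite symmetric decay space with metricity at most `ζ > 0` and quasi-distance
`d(p,q) = f(p,q)^{1/ζ}`, for links `l_u = (s_u,r_u)` and `l_w = (s_w,r_w)` with positive
decays, constants `0 < c_u ≤ c_w`, `d(s_u,r_u) ≤ d(s_w,r_w)` and
`d(s_w,r_u) ≥ (ζ/2)·d(s_w,r_w)`, the affectance of `l_w` on `l_u` is at most `e⁴` times
the affectance of `l_u` on `l_w`:
`c_u·f(s_u,r_u)/f(s_w,r_u) ≤ e⁴·c_w·f(s_w,r_w)/f(s_u,r_w)`. -/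
theorem stmt_3
    {V : Type*} [Fintype V]
    (f : V → V → ℝ)
    (hf_nonneg : ∀ p q : V, 0 ≤ f p q)
    (hf_zero : ∀ p q : V, f p q = 0 ↔ p = q)
    (hf_symm : ∀ p q : V, f p q = f q p)
    (ζ : ℝ) (hζ : 0 < ζ)
    (hmetricity : ∀ x y z : V, f x y ^ (1/ζ) ≤ f x z ^ (1/ζ) + f z y ^ (1/ζ))
    (su ru sw rw : V)
    (hpos_uu : 0 < f su ru) (hpos_ww : 0 < f sw rw)
    (hpos_wu : 0 < f sw ru) (hpos_uw : 0 < f su rw)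
    (cu cw : ℝ) (hcu : 0 < cu) (hcw : 0 < cw) (hcucw : cu ≤ cw)
    (hlen : f su ru ^ (1/ζ) ≤ f sw rw ^ (1/ζ))
    (hsep : (ζ/2) * f sw rw ^ (1/ζ) ≤ f sw ru ^ (1/ζ)) :
    cu * f su ru / f sw ru ≤ Real.exp 1 ^ 4 * (cw * f sw rw / f su rw) := by
  have hζ0 : ζ ≠ 0 := ne_of_gt hζ
  set duu := f su ru ^ (1/ζ) with hduu
  set dww := f sw rw ^ (1/ζ) with hdww
  set dwu := f sw ru ^ (1/ζ) with hdwu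
  set duw := f su rw ^ (1/ζ) with hduw
  have hduu0 : 0 < duu := Real.rpow_pos_of_pos hpos_uu _
  have hdww0 : 0 < dww := Real.rpow_pos_of_pos hpos_ww _
  have hdwu0 : 0 < dwu := Real.rpow_pos_of_pos hpos_wu _
  have hduw0 : 0 < duw := Real.rpow_pos_of_pos hpos_uw _
  -- triangle inequality through ru and sw
  have htri : duw ≤ duu + dwu + dww := by
    have h1 := hmetricity su rw ru
    have h2 := hmetricity ru rw sw
    have hsym : f ru sw ^ (1/ζ) = dwu := by rw [hf_symm ru sw, hdwu]
    calc duw ≤ duu + f ru rw ^ (1/ζ) := h1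
      _ ≤ duu + (f ru sw ^ (1/ζ) + dww) := by linarith [h2]
      _ = duu + dwu + dww := by rw [hsym]; ring
  have hww_le : dww ≤ (2/ζ) * dwu := by
    rw [div_mul_eq_mul_div, le_div_iff₀ hζ]; nlinarith [hsep]
  have hkey : duw ≤ (1 + 4/ζ) * dwu := by
    calc duw ≤ duu + dwu + dww := htri
      _ ≤ dww + dwu + dww := by linarith [hlen]
      _ ≤ (2/ζ)*dwu + dwu + (2/ζ)*dwu := by linarith
      _ = (1 + 4/ζ) * dwu := by ring
  -- recover f from d
  have hback : ∀ p q : V, (f p q ^ (1/ζ)) ^ ζ = f p q := by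
    intro p q
    rw [← Real.rpow_mul (hf_nonneg p q), one_div_mul_cancel hζ0, Real.rpow_one]
  -- key exponential bound
  have hexp : (1 + 4/ζ) ^ ζ ≤ Real.exp 1 ^ 4 := by
    have h1 : (1 + 4/ζ : ℝ) ≤ Real.exp (4/ζ) := by
      have := Real.add_one_le_exp (4/ζ); linarith
    have h2 : (1 + 4/ζ : ℝ) ^ ζ ≤ Real.exp (4/ζ) ^ ζ := by
      apply Real.rpow_le_rpow (by positivity) h1 (le_of_lt hζ)
    have h3 : Real.exp (4/ζ) ^ ζ = Real.exp 4 := by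
      rw [← Real.exp_mul, div_mul_cancel₀ _ hζ0]
    have h4 : Real.exp 1 ^ 4 = Real.exp 4 := by
      rw [Real.exp_one_pow]; norm_num
    rw [h3] at h2; rw [h4]; exact h2
  -- f-level bounds
  have hA : f su ru ≤ f sw rw := by
    rw [← hback su ru, ← hback sw rw]
    exact Real.rpow_le_rpow (le_of_lt hduu0) hlen (le_of_lt hζ)
  have hD : f su rw ≤ Real.exp 1 ^ 4 * f sw ru := by
    rw [← hback su rw, ← hback sw ru]
    calc duw ^ ζ ≤ ((1 + 4/ζ) * dwu) ^ ζ :=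
          Real.rpow_le_rpow (le_of_lt hduw0) hkey (le_of_lt hζ)
      _ = (1 + 4/ζ) ^ ζ * dwu ^ ζ :=
          Real.mul_rpow (by positivity) (le_of_lt hdwu0)
      _ ≤ Real.exp 1 ^ 4 * dwu ^ ζ := by
          have : (0:ℝ) < dwu ^ ζ := Real.rpow_pos_of_pos hdwu0 _
          nlinarith [hexp]
  -- conclude
  rw [mul_div_assoc' (Real.exp 1 ^ 4) (cw * f sw rw) (f su rw),
      div_le_div_iff₀ hpos_wu hpos_uw]
  have he : (0:ℝ) < Real.exp 1 ^ 4 := by positivity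
  nlinarith [mul_le_mul (mul_le_mul hcucw hA (le_of_lt hpos_uu) (le_of_lt hcw)) hD
    (le_of_lt hpos_uw) (by positivity : (0:ℝ) ≤ cw * f sw rw)]
end

section
/- Let (V, f) be a finite symmetric decay space with metricity at most ζ > 0 and quasi-distance d(p,q) = f(p,q)^{1/ζ}. Let s_v, s_g, s_x, r_x ∈ V be points such that d(s_g, s_x) ≤ d(s_v, s_x), ζ·d(s_x, r_x) ≤ d(s_v, r_x), and ζ·d(s_x, r_x) ≤ d(s_g, s_x). Then f(s_g, r_x) ≤ e²·f(s_v, r_x). -/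
/-- **Guard comparison step.**
In a finite symmetric decay space with metricity at most `ζ > 0` and quasi-distance
`d(p,q) = f(p,q)^{1/ζ}`, if `d(s_g,s_x) ≤ d(s_v,s_x)`, `ζ·d(s_x,r_x) ≤ d(s_v,r_x)` and
`ζ·d(s_x,r_x) ≤ d(s_g,s_x)`, then `f(s_g,r_x) ≤ e²·f(s_v,r_x)`. -/
theorem stmt_4
    {V : Type*} [Fintype V]
    (f : V → V → ℝ)
    (hf_nonneg : ∀ p q : V, 0 ≤ f p q)
    (hf_zero : ∀ p q : V, f p q = 0 ↔ p = q)
    (hf_symm : ∀ p q : V, f p q = f q p)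
    (ζ : ℝ) (hζ : 0 < ζ)
    (hmetricity : ∀ x y z : V, f x y ^ (1/ζ) ≤ f x z ^ (1/ζ) + f z y ^ (1/ζ))
    (sv sg sx rx : V)
    (hguard : f sg sx ^ (1/ζ) ≤ f sv sx ^ (1/ζ))
    (hsep_v : ζ * f sx rx ^ (1/ζ) ≤ f sv rx ^ (1/ζ))
    (hsep_g : ζ * f sx rx ^ (1/ζ) ≤ f sg sx ^ (1/ζ)) :
    f sg rx ≤ Real.exp 1 ^ 2 * f sv rx := by
  have hζ0 : (0:ℝ) ≤ ζ := hζ.le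
  have hζ1 : (0:ℝ) ≤ ζ + 1 := by linarith
  have hdgnn : 0 ≤ f sg rx ^ (1/ζ) := Real.rpow_nonneg (hf_nonneg _ _) _
  have hdvnn : 0 ≤ f sv rx ^ (1/ζ) := Real.rpow_nonneg (hf_nonneg _ _) _
  have h1 : f sg rx ^ (1/ζ) ≤ f sg sx ^ (1/ζ) + f sx rx ^ (1/ζ) := hmetricity sg rx sx
  have h2 : f sv sx ^ (1/ζ) ≤ f sv rx ^ (1/ζ) + f sx rx ^ (1/ζ) := by
    have h := hmetricity sv sx rx
    rwa [hf_symm rx sx] at h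
  have hc1 : (1:ℝ) ≤ 1 + 1/ζ := by
    have : 0 < 1/ζ := by positivity
    linarith
  have hcnn : (0:ℝ) ≤ 1 + 1/ζ := le_trans zero_le_one hc1
  -- step 1: ζ·d(sg,rx) ≤ (ζ+1)·d(sg,sx)
  have s1 : ζ * (f sg rx ^ (1/ζ)) ≤ (ζ + 1) * (f sg sx ^ (1/ζ)) := by
    have h := mul_le_mul_of_nonneg_left h1 hζ0
    rw [mul_add] at h
    linarith [hsep_g]
  -- step 2: ζ·d(sv,sx) ≤ (ζ+1)·d(sv,rx)
  have s2 : ζ * (f sv sx ^ (1/ζ)) ≤ (ζ + 1) * (f sv rx ^ (1/ζ)) := by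
    have h := mul_le_mul_of_nonneg_left h2 hζ0
    rw [mul_add] at h
    linarith [hsep_v]
  -- step 3: combine with the guard inequality
  have s3 : ζ * (f sg rx ^ (1/ζ)) ≤ (ζ + 1) * (f sv sx ^ (1/ζ)) :=
    le_trans s1 (mul_le_mul_of_nonneg_left hguard hζ1)
  have s4 : ζ * (ζ * (f sg rx ^ (1/ζ))) ≤ (ζ + 1) * ((ζ + 1) * (f sv rx ^ (1/ζ))) := by
    calc ζ * (ζ * (f sg rx ^ (1/ζ)))
        ≤ ζ * ((ζ + 1) * (f sv sx ^ (1/ζ))) := mul_le_mul_of_nonneg_left s3 hζ0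
      _ = (ζ + 1) * (ζ * (f sv sx ^ (1/ζ))) := by ring
      _ ≤ (ζ + 1) * ((ζ + 1) * (f sv rx ^ (1/ζ))) := mul_le_mul_of_nonneg_left s2 hζ1
  -- key: d(sg,rx) ≤ (1+1/ζ)²·d(sv,rx)
  have key : f sg rx ^ (1/ζ) ≤ (1 + 1/ζ)^2 * (f sv rx ^ (1/ζ)) := by
    have hζ2 : (0:ℝ) < ζ^2 := by positivity
    have heq : (1 + 1/ζ)^2 * (f sv rx ^ (1/ζ))
        = ((ζ + 1) * ((ζ + 1) * (f sv rx ^ (1/ζ)))) / ζ^2 := by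
      field_simp
    rw [heq, le_div_iff₀ hζ2]
    calc (f sg rx ^ (1/ζ)) * ζ^2 = ζ * (ζ * (f sg rx ^ (1/ζ))) := by ring
      _ ≤ (ζ + 1) * ((ζ + 1) * (f sv rx ^ (1/ζ))) := s4
  -- raise to power ζ
  have e1 : (f sg rx ^ (1/ζ)) ^ ζ = f sg rx := by
    rw [← Real.rpow_mul (hf_nonneg sg rx), one_div_mul_cancel hζ.ne', Real.rpow_one]
  have e2 : (f sv rx ^ (1/ζ)) ^ ζ = f sv rx := by
    rw [← Real.rpow_mul (hf_nonneg sv rx), one_div_mul_cancel hζ.ne', Real.rpow_one]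
  have mono : (f sg rx ^ (1/ζ)) ^ ζ ≤ ((1 + 1/ζ)^2 * (f sv rx ^ (1/ζ))) ^ ζ :=
    Real.rpow_le_rpow hdgnn key hζ0
  have split : ((1 + 1/ζ)^2 * (f sv rx ^ (1/ζ))) ^ ζ
      = ((1 + 1/ζ)^2 : ℝ) ^ ζ * (f sv rx ^ (1/ζ)) ^ ζ :=
    Real.mul_rpow (by positivity) hdvnn
  -- bound ((1+1/ζ)²)^ζ ≤ e²
  have hce : (1 + 1/ζ) ^ ζ ≤ Real.exp 1 := by
    have h3 : 1 + 1/ζ ≤ Real.exp (1/ζ) := by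
      have := Real.add_one_le_exp (1/ζ)
      linarith
    calc (1 + 1/ζ) ^ ζ ≤ (Real.exp (1/ζ)) ^ ζ := Real.rpow_le_rpow hcnn h3 hζ0
      _ = Real.exp 1 := by
          rw [← Real.exp_one_rpow (1/ζ), ← Real.rpow_mul (Real.exp_pos 1).le,
            one_div_mul_cancel hζ.ne', Real.rpow_one]
  have hc2 : ((1 + 1/ζ)^2 : ℝ) ^ ζ = ((1 + 1/ζ) ^ ζ)^2 := by
    rw [← Real.rpow_natCast (1 + 1/ζ) 2, ← Real.rpow_mul hcnn, mul_comm,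
      Real.rpow_mul hcnn, Real.rpow_natCast]
  have hfinal : ((1 + 1/ζ)^2 : ℝ) ^ ζ ≤ Real.exp 1 ^ 2 := by
    rw [hc2]
    exact pow_le_pow_left₀ (Real.rpow_nonneg hcnn ζ) hce 2
  calc f sg rx = (f sg rx ^ (1/ζ)) ^ ζ := e1.symm
    _ ≤ ((1 + 1/ζ)^2 * (f sv rx ^ (1/ζ))) ^ ζ := mono
    _ = ((1 + 1/ζ)^2 : ℝ) ^ ζ * (f sv rx ^ (1/ζ)) ^ ζ := split
    _ ≤ Real.exp 1 ^ 2 * f sv rx := by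
        rw [e2]
        exact mul_le_mul_of_nonneg_right hfinal (hf_nonneg sv rx)
end

section
/- Let G be a graph on vertex set {1,…,n} with n ≥ 2, let α' ≥ 1 be a real number and 0 < δ < 1/2. Define n links l_1,…,l_n with decays f(s_i, r_i) = n^{α'} for all i, and for i ≠ j: f(s_i, r_j) = n^{α'} − δ if {i,j} is an edge of G, and f(s_i, r_j) = n^{α'+1} if {i,j} is not an edge. With SINR threshold β = 1 and zero noise, for every S ⊆ {1,…,n}: (a) if S is an independent set in G, then S is feasible under uniform power, i.e., Σ_{j ∈ S, j ≠ i} f(s_i,r_i)/f(s_j,r_i) = (|S|−1)/n ≤ 1 for every i ∈ S; and (b) if S contains two adjacent vertices, then for every power assignment P : S → ℝ_{>0} there is some i ∈ S with Σ_{j ∈ S, j ≠ i} (P_j/f(s_j,r_i))/(P_i/f(s_i,r_i)) > 1. Hence S is feasible under some positive power assignment if and only if S is independent in G. -/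
/-- **Correctness of the independent-set reduction (two-line construction).**
Let `G` be a graph on `{1,…,n}`, `n ≥ 2`, `α' ≥ 1`, `0 < δ < 1/2`, and define decays
`F j i` (from sender `s_j` to receiver `r_i`) by `F i i = n^{α'}`,
`F j i = n^{α'} − δ` if `{i,j} ∈ E(G)`, and `F j i = n^{α'+1}` otherwise.  With threshold
`β = 1` and zero noise: (a) independent sets are feasible under uniform power (the
in-affectance being `(|S|−1)/n ≤ 1`); (b) if `S` contains an edge then every positive
power assignment leaves some link with in-affectance `> 1`; hence `S` is feasible under
some positive power assignment iff `S` is independent in `G`. -/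
theorem stmt_6
    (n : ℕ) (hn : 2 ≤ n) (G : SimpleGraph (Fin n)) [DecidableRel G.Adj]
    (α' δ : ℝ) (hα' : 1 ≤ α') (hδ0 : 0 < δ) (hδ : δ < 1/2)
    (F : Fin n → Fin n → ℝ)
    (hF : ∀ j i : Fin n, F j i =
      if j = i then (n : ℝ) ^ α'
      else if G.Adj j i then (n : ℝ) ^ α' - δ
      else (n : ℝ) ^ (α' + 1)) :
    ∀ S : Finset (Fin n),
      ((∀ i ∈ S, ∀ j ∈ S, i ≠ j → ¬ G.Adj i j) →
        ∀ i ∈ S, (∑ j ∈ S.erase i, F i i / F j i) = ((S.card : ℝ) - 1) / n ∧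
                 (∑ j ∈ S.erase i, F i i / F j i) ≤ 1) ∧
      ((∃ i ∈ S, ∃ j ∈ S, G.Adj i j) →
        ∀ P : Fin n → ℝ, (∀ k ∈ S, 0 < P k) →
          ∃ i ∈ S, 1 < ∑ j ∈ S.erase i, (P j / F j i) / (P i / F i i)) ∧
      ((∃ P : Fin n → ℝ, (∀ k ∈ S, 0 < P k) ∧
          ∀ i ∈ S, ∑ j ∈ S.erase i, (P j / F j i) / (P i / F i i) ≤ 1) ↔
        (∀ i ∈ S, ∀ j ∈ S, i ≠ j → ¬ G.Adj i j)) := by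
  have hn2 : (2:ℝ) ≤ (n:ℝ) := by exact_mod_cast hn
  have hn0 : (0:ℝ) < (n:ℝ) := by linarith
  have hpow : (n:ℝ) ≤ (n:ℝ) ^ α' := by
    calc (n:ℝ) = (n:ℝ) ^ (1:ℝ) := (Real.rpow_one _).symm
    _ ≤ (n:ℝ) ^ α' := Real.rpow_le_rpow_of_exponent_le (by linarith) hα'
  have hApos : 0 < (n:ℝ) ^ α' := Real.rpow_pos_of_pos hn0 _
  have hAd : 0 < (n:ℝ) ^ α' - δ := by linarith
  have hB : (n:ℝ) ^ (α' + 1) = (n:ℝ) ^ α' * n := by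
    rw [Real.rpow_add hn0, Real.rpow_one]
  have hBpos : 0 < (n:ℝ) ^ (α' + 1) := Real.rpow_pos_of_pos hn0 _
  have Fpos : ∀ j i : Fin n, 0 < F j i := by
    intro j i
    rw [hF]
    split_ifs
    · exact hApos
    · exact hAd
    · exact hBpos
  intro S
  have parta : (∀ i ∈ S, ∀ j ∈ S, i ≠ j → ¬ G.Adj i j) →
      ∀ i ∈ S, (∑ j ∈ S.erase i, F i i / F j i) = ((S.card : ℝ) - 1) / n ∧
               (∑ j ∈ S.erase i, F i i / F j i) ≤ 1 := by
    intro hind i hi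
    have hsum : (∑ j ∈ S.erase i, F i i / F j i) = ((S.card : ℝ) - 1) / n := by
      have hterm : ∀ j ∈ S.erase i, F i i / F j i = 1 / n := by
        intro j hj
        have hji : j ≠ i := Finset.ne_of_mem_erase hj
        have hjS : j ∈ S := Finset.mem_of_mem_erase hj
        have hadj : ¬ G.Adj j i := hind j hjS i hi hji
        rw [hF j i, hF i i, if_pos rfl, if_neg hji, if_neg hadj, hB,
          div_mul_eq_div_div, div_self hApos.ne']
      rw [Finset.sum_congr rfl hterm, Finset.sum_const, Finset.card_erase_of_mem hi,
        nsmul_eq_mul, Nat.cast_sub (Finset.card_pos.mpr ⟨i, hi⟩), Nat.cast_one]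
      ring
    refine ⟨hsum, ?_⟩
    rw [hsum]
    have hcardn : (S.card : ℝ) ≤ n := by
      have := Finset.card_le_card (Finset.subset_univ S)
      simp only [Finset.card_univ, Fintype.card_fin] at this
      exact_mod_cast this
    rw [div_le_one hn0]
    linarith
  have partb : (∃ i ∈ S, ∃ j ∈ S, G.Adj i j) →
      ∀ P : Fin n → ℝ, (∀ k ∈ S, 0 < P k) →
        ∃ i ∈ S, 1 < ∑ j ∈ S.erase i, (P j / F j i) / (P i / F i i) := by
    rintro ⟨i, hi, j, hj, hij⟩ P hP
    by_contra hcon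
    push_neg at hcon
    set A := (n:ℝ) ^ α' with hA
    have hPi := hP i hi
    have hPj := hP j hj
    -- the cross terms
    have hterm : ∀ a b : Fin n, a ∈ S → b ∈ S → G.Adj a b →
        (P b / (A - δ)) / (P a / A) ≤ ∑ k ∈ S.erase a, (P k / F k a) / (P a / F a a) := by
      intro a b ha hb hab
      have hb' : b ∈ S.erase a := Finset.mem_erase.mpr ⟨hab.ne', hb⟩
      have heq : (P b / F b a) / (P a / F a a) = (P b / (A - δ)) / (P a / A) := by
        rw [hF b a, hF a a, if_pos rfl, if_neg hab.ne', if_pos hab.symm]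
      rw [← heq]
      refine Finset.single_le_sum (f := fun k => (P k / F k a) / (P a / F a a)) (fun k hk => ?_) hb'
      have hkS : k ∈ S := Finset.mem_of_mem_erase hk
      have := hP k hkS
      have := hP a ha
      have := Fpos k a
      have := Fpos a a
      positivity
    have h1 : (P j / (A - δ)) / (P i / A) ≤ 1 :=
      le_trans (hterm i j hi hj hij) (hcon i hi)
    have h2 : (P i / (A - δ)) / (P j / A) ≤ 1 :=
      le_trans (hterm j i hj hi hij.symm) (hcon j hj)
    have hprod : ((P j / (A - δ)) / (P i / A)) * ((P i / (A - δ)) / (P j / A))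
        = (A / (A - δ)) ^ 2 := by
      field_simp
    have hgt : 1 < (A / (A - δ)) ^ 2 := by
      have : 1 < A / (A - δ) := (one_lt_div hAd).mpr (by linarith)
      nlinarith
    have ht1 : 0 < (P j / (A - δ)) / (P i / A) := by positivity
    have ht2 : 0 < (P i / (A - δ)) / (P j / A) := by positivity
    nlinarith
  refine ⟨parta, partb, ?_⟩
  constructor
  · rintro ⟨P, hP, hfeas⟩
    intro i hi j hj hne
    by_contra hadj
    obtain ⟨a, ha, hgt⟩ := partb ⟨i, hi, j, hj, hadj⟩ P hP
    exact absurd (hfeas a ha) (not_le.mpr hgt)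
  · intro hind
    refine ⟨fun _ => 1, fun k _ => one_pos, fun i hi => ?_⟩
    have : (∑ j ∈ S.erase i, ((1:ℝ) / F j i) / (1 / F i i))
        = ∑ j ∈ S.erase i, F i i / F j i := by
      refine Finset.sum_congr rfl fun j hj => ?_
      have h1 := (Fpos j i).ne'
      have h2 := (Fpos i i).ne'
      field_simp
    show (∑ j ∈ S.erase i, ((1:ℝ) / F j i) / (1 / F i i)) ≤ 1
    rw [this]
    exact (parta hind i hi).2
end

section
/- Let n ≥ 2 be an integer, α' ≥ 1 a real number and 0 < δ < 1/2. Consider the 2n points s_1,…,s_n, r_1,…,r_n and the symmetric decay function f defined by: f(s_i, s_j) = f(r_i, r_j) = |i−j|^{α'} for i ≠ j; f(s_i, r_i) = f(r_i, s_i) = n^{α'}; f(s_i, r_j) = f(r_j, s_i) = n^{α'} − δ if {i,j} is an edge of a given graph G on {1,…,n}, and n^{α'+1} if i ≠ j and {i,j} is not an edge; and f(p,p) = 0. Then for all points a, b, c among these 2n points, f(a,c) ≤ max(2^{α'}, 2n)·(f(a,b) + f(b,c)). -/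
/-- The two-line decay function of the paper's hardness construction: senders
`s_1,…,s_n` (left summand) and receivers `r_1,…,r_n` (right summand); decays within a
line are `α'`-th powers of Euclidean distances, cross-line decays are `n^{α'}` on a link,
`n^{α'} − δ` across an edge of `G`, and `n^{α'+1}` otherwise. -/
noncomputable def twoLineDecay (n : ℕ) (α' δ : ℝ) (G : SimpleGraph (Fin n))
    [DecidableRel G.Adj] : (Fin n ⊕ Fin n) → (Fin n ⊕ Fin n) → ℝ
  | Sum.inl i, Sum.inl j => if i = j then 0 else |(i : ℝ) - (j : ℝ)| ^ α'
  | Sum.inr i, Sum.inr j => if i = j then 0 else |(i : ℝ) - (j : ℝ)| ^ α'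
  | Sum.inl i, Sum.inr j =>
      if i = j then (n : ℝ) ^ α'
      else if G.Adj i j then (n : ℝ) ^ α' - δ
      else (n : ℝ) ^ (α' + 1)
  | Sum.inr j, Sum.inl i =>
      if i = j then (n : ℝ) ^ α'
      else if G.Adj i j then (n : ℝ) ^ α' - δ
      else (n : ℝ) ^ (α' + 1)

private lemma rpow_add_le_aux (x y α : ℝ) (hx : 0 ≤ x) (hy : 0 ≤ y) (hα : 0 ≤ α) :
    (x + y) ^ α ≤ 2 ^ α * (x ^ α + y ^ α) := by
  have hmax : x + y ≤ 2 * max x y := by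
    rcases le_total x y with h | h
    · rw [max_eq_right h]; linarith
    · rw [max_eq_left h]; linarith
  have h1 : (x + y) ^ α ≤ (2 * max x y) ^ α :=
    Real.rpow_le_rpow (by linarith) hmax hα
  have h2 : (2 * max x y) ^ α = 2 ^ α * (max x y) ^ α :=
    Real.mul_rpow (by norm_num) (le_max_of_le_left hx)
  have h3 : (max x y) ^ α ≤ x ^ α + y ^ α := by
    rcases le_total x y with h | h
    · rw [max_eq_right h]
      have := Real.rpow_nonneg hx α; linarith
    · rw [max_eq_left h]
      have := Real.rpow_nonneg hy α; linarith
  calc (x + y) ^ α ≤ 2 ^ α * (max x y) ^ α := h1.trans_eq h2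
    _ ≤ 2 ^ α * (x ^ α + y ^ α) := by
        have : (0:ℝ) ≤ (2:ℝ) ^ α := Real.rpow_nonneg (by norm_num) α
        nlinarith

set_option maxHeartbeats 1000000 in
/-- **The multiplicative triangle parameter of the two-line construction is bounded.**
For all points `a, b, c` among the `2n` points of the construction,
`f(a,c) ≤ max(2^{α'}, 2n)·(f(a,b) + f(b,c))`. -/
theorem stmt_7
    (n : ℕ) (hn : 2 ≤ n) (α' δ : ℝ) (hα' : 1 ≤ α') (hδ0 : 0 < δ) (hδ : δ < 1/2)
    (G : SimpleGraph (Fin n)) [DecidableRel G.Adj] :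
    ∀ a b c : Fin n ⊕ Fin n,
      twoLineDecay n α' δ G a c ≤
        max ((2 : ℝ) ^ α') (2 * (n : ℝ)) *
          (twoLineDecay n α' δ G a b + twoLineDecay n α' δ G b c) := by
  have hn1 : (1:ℝ) ≤ n := by exact_mod_cast Nat.one_le_of_lt hn
  have hn0 : (0:ℝ) < n := by linarith
  have hpow1 : (1:ℝ) ≤ (n:ℝ) ^ α' := Real.one_le_rpow hn1 (by linarith)
  have hpow0 : (0:ℝ) < (n:ℝ) ^ α' := by linarith
  have hsplit : (n:ℝ) ^ (α' + 1) = (n:ℝ) ^ α' * n := by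
    rw [Real.rpow_add hn0, Real.rpow_one]
  set M := max ((2 : ℝ) ^ α') (2 * (n : ℝ)) with hMdef
  have hM2n : 2 * (n:ℝ) ≤ M := le_max_right _ _
  have hM2a : (2:ℝ) ^ α' ≤ M := le_max_left _ _
  have hM1 : (1:ℝ) ≤ M := by nlinarith
  set f := twoLineDecay n α' δ G with hf
  have hlt : ∀ i : Fin n, (i:ℝ) < n := by
    intro i; exact_mod_cast i.isLt
  have h0 : ∀ i : Fin n, (0:ℝ) ≤ (i:ℝ) := by
    intro i; positivity
  have habs : ∀ i j : Fin n, |(i:ℝ) - (j:ℝ)| ≤ n := by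
    intro i j
    have := hlt i; have := hlt j; have := h0 i; have := h0 j
    rw [abs_le]; constructor <;> linarith
  -- nonnegativity
  have hnn : ∀ a b : Fin n ⊕ Fin n, 0 ≤ f a b := by
    intro a b
    rcases a with i | i <;> rcases b with j | j <;> simp only [hf, twoLineDecay] <;>
      split_ifs <;>
      first
        | positivity
        | linarith
  -- upper bound
  have hub : ∀ a b : Fin n ⊕ Fin n, f a b ≤ (n:ℝ) ^ (α' + 1) := by
    have hside : ∀ i j : Fin n, |(i:ℝ) - (j:ℝ)| ^ α' ≤ (n:ℝ) ^ (α' + 1) := by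
      intro i j
      have h1 : |(i:ℝ) - (j:ℝ)| ^ α' ≤ (n:ℝ) ^ α' :=
        Real.rpow_le_rpow (abs_nonneg _) (habs i j) (by linarith)
      nlinarith
    intro a b
    rcases a with i | i <;> rcases b with j | j <;> simp only [hf, twoLineDecay] <;>
      split_ifs <;>
      first
        | exact hside _ _
        | nlinarith
  -- cross lower bound
  have hcl : ∀ i j : Fin n, (n:ℝ) ^ α' / 2 ≤ f (Sum.inl i) (Sum.inr j) := by
    intro i j
    simp only [hf, twoLineDecay]
    split_ifs <;> nlinarith
  have hcr : ∀ i j : Fin n, (n:ℝ) ^ α' / 2 ≤ f (Sum.inr i) (Sum.inl j) := by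
    intro i j
    simp only [hf, twoLineDecay]
    split_ifs <;> nlinarith
  -- mixed key lemma
  have hkey : ∀ a b c : Fin n ⊕ Fin n,
      ((n:ℝ) ^ α' / 2 ≤ f a b ∨ (n:ℝ) ^ α' / 2 ≤ f b c) →
      f a c ≤ M * (f a b + f b c) := by
    intro a b c hor
    have h1 := hnn a b
    have h2 := hnn b c
    have h3 := hub a c
    have hs : (n:ℝ) ^ α' / 2 ≤ f a b + f b c := by
      rcases hor with h | h <;> linarith
    calc f a c ≤ (n:ℝ) ^ (α' + 1) := h3
      _ = 2 * (n:ℝ) * ((n:ℝ) ^ α' / 2) := by rw [hsplit]; ring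
      _ ≤ M * (f a b + f b c) :=
          mul_le_mul hM2n hs (by positivity) (by linarith)
  -- same-line lemma (real level)
  have hreal : ∀ i j k : Fin n,
      (if i = k then (0:ℝ) else |(i:ℝ) - (k:ℝ)| ^ α') ≤
        M * ((if i = j then (0:ℝ) else |(i:ℝ) - (j:ℝ)| ^ α') +
             (if j = k then (0:ℝ) else |(j:ℝ) - (k:ℝ)| ^ α')) := by
    intro i j k
    by_cases hik : i = k
    · rw [if_pos hik]
      have ht1 : (0:ℝ) ≤ (if i = j then (0:ℝ) else |(i:ℝ) - (j:ℝ)| ^ α') := by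
        split_ifs
        · exact le_rfl
        · positivity
      have ht2 : (0:ℝ) ≤ (if j = k then (0:ℝ) else |(j:ℝ) - (k:ℝ)| ^ α') := by
        split_ifs
        · exact le_rfl
        · positivity
      nlinarith
    · rw [if_neg hik]
      by_cases hij : i = j
      · subst hij
        rw [if_pos rfl, if_neg hik]
        nlinarith [Real.rpow_nonneg (abs_nonneg ((i:ℝ) - (k:ℝ))) α']
      · by_cases hjk : j = k
        · subst hjk
          rw [if_neg hij, if_pos rfl]
          nlinarith [Real.rpow_nonneg (abs_nonneg ((i:ℝ) - (j:ℝ))) α']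
        · rw [if_neg hij, if_neg hjk]
          have htri : |(i:ℝ) - (k:ℝ)| ≤ |(i:ℝ) - (j:ℝ)| + |(j:ℝ) - (k:ℝ)| :=
            abs_sub_le _ _ _
          have h1 : |(i:ℝ) - (k:ℝ)| ^ α' ≤ (|(i:ℝ) - (j:ℝ)| + |(j:ℝ) - (k:ℝ)|) ^ α' :=
            Real.rpow_le_rpow (abs_nonneg _) htri (by linarith)
          have h2 := rpow_add_le_aux |(i:ℝ) - (j:ℝ)| |(j:ℝ) - (k:ℝ)| α'
            (abs_nonneg _) (abs_nonneg _) (by linarith)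
          have h3 : (0:ℝ) ≤ |(i:ℝ) - (j:ℝ)| ^ α' + |(j:ℝ) - (k:ℝ)| ^ α' := by positivity
          nlinarith
  intro a b c
  show f a c ≤ M * (f a b + f b c)
  rcases a with i | i <;> rcases b with j | j <;> rcases c with k | k
  · show f (Sum.inl i) (Sum.inl k) ≤ _
    simp only [hf, twoLineDecay]
    exact hreal i j k
  · exact hkey _ _ _ (Or.inr (hcl j k))
  · exact hkey _ _ _ (Or.inl (hcl i j))
  · exact hkey _ _ _ (Or.inl (hcl i j))
  · exact hkey _ _ _ (Or.inl (hcr i j))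
  · exact hkey _ _ _ (Or.inl (hcr i j))
  · exact hkey _ _ _ (Or.inr (hcr j k))
  · simp only [hf, twoLineDecay]
    exact hreal i j k
end

section
/- For q ≥ 1, consider the symmetric decay space on three points {a, b, c} with f(a,b) = 1, f(b,c) = q, f(a,c) = 2q (and f(p,p) = 0). Then: (i) for every q ≥ 1 and all x, y, z ∈ {a,b,c}, f(x,z) ≤ 2·(f(x,y) + f(y,z)), so the multiplicative triangle parameter of the space is at most 2; and (ii) for every ζ ≥ 1 there exists q ≥ 1 such that (2q)^{1/ζ} > 1 + q^{1/ζ}, so that the metricity of the space exceeds ζ for q large enough. Hence the multiplicative triangle parameter stays bounded by 2 over this family while the metricity is unbounded. -/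
/-!
Only the pair `a, c` can violate a triangle inequality, and `2q ≤ 2·(1 + q)` settles it, so
the factor `2` always suffices. For the `1/ζ`-power triangle inequality through `b` one
needs `(2q)^{1/ζ} ≤ 1 + q^{1/ζ}`, i.e. `(2^{1/ζ} - 1)·q^{1/ζ} ≤ 1`, which fails once `q` is
large because `2^{1/ζ} > 1`.
-/

/-- The paper's three-point decay space on `{a, b, c} = {0, 1, 2}` with `f(a,b) = 1`,
`f(b,c) = q`, `f(a,c) = 2q` (symmetric, zero on the diagonal). -/
def threePointDecay (q : ℝ) : Fin 3 → Fin 3 → ℝ := fun x y =>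
  if x = y then 0
  else if (x = 0 ∧ y = 1) ∨ (x = 1 ∧ y = 0) then 1
  else if (x = 1 ∧ y = 2) ∨ (x = 2 ∧ y = 1) then q
  else 2 * q

open Filter Real

theorem threePointDecay_le_two_mul_add {q : ℝ} (hq : 1 ≤ q) (x y z : Fin 3) :
    threePointDecay q x z ≤ 2 * (threePointDecay q x y + threePointDecay q y z) := by
  fin_cases x <;> fin_cases y <;> fin_cases z <;> simp [threePointDecay] <;> linarith

theorem eventually_one_add_rpow_lt_rpow_two_mul {p : ℝ} (hp : 0 < p) :
    ∀ᶠ q : ℝ in atTop, 1 + q ^ p < (2 * q) ^ p := by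
  have hc : 0 < (2 : ℝ) ^ p - 1 := sub_pos.2 (one_lt_rpow (by norm_num) hp)
  filter_upwards [(tendsto_rpow_atTop hp).eventually_gt_atTop (1 / (2 ^ p - 1)),
    eventually_ge_atTop 0] with q hlarge hq
  have hgap : 1 < (2 ^ p - 1) * q ^ p := by rwa [div_lt_iff₀' hc] at hlarge
  rw [mul_rpow zero_le_two hq]
  linarith

theorem exists_one_add_rpow_lt_rpow_two_mul {p : ℝ} (hp : 0 < p) :
    ∃ q : ℝ, 1 ≤ q ∧ 1 + q ^ p < (2 * q) ^ p :=
  ((eventually_ge_atTop 1).and (eventually_one_add_rpow_lt_rpow_two_mul hp)).exists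

/-- **The multiplicative triangle parameter can stay bounded while metricity blows up.**
(i) For every `q ≥ 1` the three-point space satisfies `f(x,z) ≤ 2·(f(x,y) + f(y,z))`
for all triples, so its multiplicative triangle parameter is at most `2`; and
(ii) for every `ζ ≥ 1` there is `q ≥ 1` with `(2q)^{1/ζ} > 1 + q^{1/ζ}`, so the
metricity of the space exceeds `ζ` for `q` large enough. -/
theorem stmt_10 :
    (∀ q : ℝ, 1 ≤ q → ∀ x y z : Fin 3,
      threePointDecay q x z ≤ 2 * (threePointDecay q x y + threePointDecay q y z)) ∧
    (∀ ζ : ℝ, 1 ≤ ζ → ∃ q : ℝ, 1 ≤ q ∧ 1 + q ^ (1/ζ) < (2 * q) ^ (1/ζ)) :=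
  ⟨fun _ hq => threePointDecay_le_two_mul_add hq,
    fun _ hζ => exists_one_add_rpow_lt_rpow_two_mul (by positivity)⟩
end

section
/- For every finite set S of points in the Euclidean plane ℝ² and every x ∈ S, there exists a subset J ⊆ S \ {x} with |J| ≤ 6 such that for every z ∈ S \ {x} there is some y ∈ J with ‖z − y‖ ≤ ‖z − x‖ (that is, at most six points of S suffice to guard x from every other point of S). -/
/-!
Around `x`, split the plane into six sectors of angle `π / 3` and keep, in each sector, a point
of `S` nearest to `x`. If `y` and `z` lie in the same sector and `‖y - x‖ ≤ ‖z - x‖`, the angle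
at `x` is at most `π / 3`, so its cosine is at least `1 / 2` and the law of cosines gives
`‖z - y‖ ≤ ‖z - x‖`.
-/

open InnerProductGeometry Real

theorem norm_sub_le_norm_of_angle_le_pi_div_three {V : Type*} [NormedAddCommGroup V]
    [InnerProductSpace ℝ V] {v w : V} (hangle : angle v w ≤ π / 3) (hvw : ‖v‖ ≤ ‖w‖) :
    ‖w - v‖ ≤ ‖w‖ := by
  have hcos : 1 / 2 ≤ cos (angle v w) := by
    rw [← cos_pi_div_three]
    exact cos_le_cos_of_nonneg_of_le_pi (angle_nonneg v w) (by linarith [pi_pos]) hangle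
  have hcosine := norm_sub_sq_eq_norm_sq_add_norm_sq_sub_two_mul_norm_mul_norm_mul_cos_angle w v
  rw [angle_comm] at hcosine
  refine (mul_self_le_mul_self_iff (norm_nonneg _) (norm_nonneg _)).mpr ?_
  nlinarith [norm_nonneg v, mul_nonneg (norm_nonneg v) (norm_nonneg w)]

theorem Complex.angle_eq_abs_arg_sub_arg {z w : ℂ} (hz : z ≠ 0) (hw : w ≠ 0)
    (h : z.arg - w.arg ∈ Set.Ioc (-π) π) : angle z w = |z.arg - w.arg| := by
  rw [Complex.angle_eq_abs_arg hz hw, ← Complex.arg_coe_angle_toReal_eq_arg,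
    Complex.arg_div_coe_angle hz hw, ← Real.Angle.coe_sub,
    Real.Angle.toReal_coe_eq_self_iff_mem_Ioc.mpr h]

/-- Sector `k` is the arc of arguments `((k - 1) π / 3, k π / 3]`. -/
noncomputable def sextant (z : ℂ) : ℤ := ⌈z.arg / (π / 3)⌉

theorem sextant_mem_Icc (z : ℂ) : sextant z ∈ Finset.Icc (-2 : ℤ) 3 := by
  have hpi : 0 < π / 3 := by linarith [pi_pos]
  rw [Finset.mem_Icc, sextant, Int.le_ceil_iff, Int.ceil_le]
  push_cast
  constructor
  · rw [lt_div_iff₀ hpi]; linarith [Complex.neg_pi_lt_arg z]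
  · rw [div_le_iff₀ hpi]; linarith [Complex.arg_le_pi z]

theorem abs_arg_sub_arg_lt_of_sextant_eq {z w : ℂ} (h : sextant z = sextant w) :
    |z.arg - w.arg| < π / 3 := by
  have hpi : 0 < π / 3 := by linarith [pi_pos]
  have hfloor : ⌊-(z.arg / (π / 3))⌋ = ⌊-(w.arg / (π / 3))⌋ := by
    rw [Int.floor_neg, Int.floor_neg]; exact congrArg Neg.neg h
  have hdiff := Int.abs_sub_lt_one_of_floor_eq_floor hfloor
  rw [neg_sub_neg, ← sub_div, abs_div, abs_of_pos hpi, div_lt_one hpi] at hdiff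
  rwa [abs_sub_comm]

theorem Complex.angle_le_pi_div_three_of_sextant_eq {z w : ℂ} (hz : z ≠ 0) (hw : w ≠ 0)
    (h : sextant z = sextant w) : angle z w ≤ π / 3 := by
  have hlt := abs_arg_sub_arg_lt_of_sextant_eq h
  rw [Complex.angle_eq_abs_arg_sub_arg hz hw]
  · exact hlt.le
  · rw [abs_lt] at hlt
    constructor <;> linarith [pi_pos]

theorem norm_sub_le_norm_of_sextant_eq {V : Type*} [NormedAddCommGroup V]
    [InnerProductSpace ℝ V] (e : V ≃ₗᵢ[ℝ] ℂ) {v w : V} (hv : v ≠ 0) (hw : w ≠ 0)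
    (h : sextant (e v) = sextant (e w)) (hvw : ‖v‖ ≤ ‖w‖) : ‖w - v‖ ≤ ‖w‖ := by
  refine norm_sub_le_norm_of_angle_le_pi_div_three ?_ hvw
  rw [← e.toLinearIsometry.angle_map]
  exact Complex.angle_le_pi_div_three_of_sextant_eq (by simpa using hv) (by simpa using hw) h

theorem exists_guards_of_coloring {E ι : Type*} [PseudoMetricSpace E] (S : Finset E) (x : E)
    (c : E → ι) (I : Finset ι) (hcI : ∀ z ∈ S, c z ∈ I)
    (hc : ∀ y z, y ≠ x → z ≠ x → c y = c z → dist y x ≤ dist z x → dist z y ≤ dist z x) :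
    ∃ J : Finset E, J ⊆ S ∧ x ∉ J ∧ J.card ≤ I.card ∧
      ∀ z ∈ S, z ≠ x → ∃ y ∈ J, dist z y ≤ dist z x := by
  classical
  set T : ι → Finset E := fun i => (S.erase x).filter (c · = i)
  have hmemT : ∀ z ∈ S.erase x, z ∈ T (c z) := fun z hz => Finset.mem_filter.mpr ⟨hz, rfl⟩
  have hnearest : ∀ i, ∃ m, ∀ z ∈ T i, m ∈ T i ∧ dist m x ≤ dist z x := by
    intro i
    by_cases hT : (T i).Nonempty
    · obtain ⟨m, hm, hmin⟩ := (T i).exists_min_image (dist · x) hT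
      exact ⟨m, fun z hz => ⟨hm, hmin z hz⟩⟩
    · exact ⟨x, fun z hz => absurd ⟨z, hz⟩ hT⟩
  choose g hg using hnearest
  have hgT : ∀ z ∈ S.erase x, g (c z) ∈ T (c z) := fun z hz => (hg _ z (hmemT z hz)).1
  refine ⟨((S.erase x).image c).image g, ?_, ?_, ?_, ?_⟩
  · simp only [Finset.subset_iff, Finset.mem_image]
    rintro _ ⟨_, ⟨z, hz, rfl⟩, rfl⟩
    exact Finset.mem_of_mem_erase (Finset.mem_filter.mp (hgT z hz)).1
  · simp only [Finset.mem_image, not_exists, not_and]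
    rintro _ ⟨z, hz, rfl⟩ hgx
    exact Finset.ne_of_mem_erase (Finset.mem_filter.mp (hgT z hz)).1 hgx
  · refine Finset.card_image_le.trans (Finset.card_le_card ?_)
    simp only [Finset.subset_iff, Finset.mem_image]
    rintro _ ⟨z, hz, rfl⟩
    exact hcI z (Finset.mem_of_mem_erase hz)
  · intro z hz hzx
    have hz' : z ∈ S.erase x := Finset.mem_erase.mpr ⟨hzx, hz⟩
    obtain ⟨hgz, hgle⟩ := hg _ z (hmemT z hz')
    obtain ⟨hgS, hgc⟩ := Finset.mem_filter.mp hgz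
    refine ⟨g (c z), Finset.mem_image_of_mem g (Finset.mem_image_of_mem c hz'), ?_⟩
    exact hc _ z (Finset.ne_of_mem_erase hgS) hzx hgc hgle

theorem stmt_11_general
    (S : Finset (EuclideanSpace ℝ (Fin 2)))
    (x : EuclideanSpace ℝ (Fin 2)) :
    ∃ J : Finset (EuclideanSpace ℝ (Fin 2)),
      J ⊆ S ∧ x ∉ J ∧ J.card ≤ 6 ∧
      ∀ z ∈ S, z ≠ x → ∃ y ∈ J, ‖z - y‖ ≤ ‖z - x‖ := by
  let e := Complex.orthonormalBasisOneI.repr.symm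
  obtain ⟨J, hJS, hxJ, hcard, hguard⟩ := exists_guards_of_coloring S x
    (fun z => sextant (e (z - x))) (Finset.Icc (-2) 3) (fun z _ => sextant_mem_Icc _)
    (fun y z hy hz hyz hle => by
      simpa [dist_eq_norm] using norm_sub_le_norm_of_sextant_eq e (sub_ne_zero.mpr hy)
        (sub_ne_zero.mpr hz) hyz (by simpa [dist_eq_norm] using hle))
  refine ⟨J, hJS, hxJ, by simpa using hcard, fun z hz hzx => ?_⟩
  simpa [dist_eq_norm] using hguard z hz hzx

/-- **Six guards suffice in the Euclidean plane.**
For every finite set `S` of points in `ℝ²` and every `x ∈ S`, there is a subset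
`J ⊆ S \ {x}` with `|J| ≤ 6` such that every `z ∈ S \ {x}` satisfies
`‖z − y‖ ≤ ‖z − x‖` for some `y ∈ J`. -/
theorem stmt_11
    (S : Finset (EuclideanSpace ℝ (Fin 2)))
    (x : EuclideanSpace ℝ (Fin 2)) (hx : x ∈ S) :
    ∃ J : Finset (EuclideanSpace ℝ (Fin 2)),
      J ⊆ S ∧ x ∉ J ∧ J.card ≤ 6 ∧
      ∀ z ∈ S, z ≠ x → ∃ y ∈ J, ‖z - y‖ ≤ ‖z - x‖ :=
  stmt_11_general S x
end

section
/- Let (V, f) be a finite symmetric decay space with metricity at most ζ ≥ 1 and quasi-distance d(p,q) = f(p,q)^{1/ζ}. Let l_v = (s_v, r_v) be a link and W ⊆ V a finite set of points (interfering senders) such that every w ∈ W satisfies d(w, s_v) ≥ 2·d(s_v, r_v) and w ≠ s_v. Then Σ_{w ∈ W} 1/f(w, r_v) ≤ 2^ζ · Σ_{w ∈ W} 1/f(w, s_v); that is, the total interference received at the receiver r_v is at most 2^ζ times the total interference received at the sender s_v. -/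
/-- **Interference at the receiver versus at the sender.**
In a finite symmetric decay space with metricity at most `ζ ≥ 1` and quasi-distance
`d(p,q) = f(p,q)^{1/ζ}`, if every interfering sender `w ∈ W` satisfies
`d(w,s_v) ≥ 2·d(s_v,r_v)` and `w ≠ s_v`, then the total interference at the receiver is
at most `2^ζ` times that at the sender:
`Σ_{w ∈ W} 1/f(w,r_v) ≤ 2^ζ·Σ_{w ∈ W} 1/f(w,s_v)`. -/
theorem stmt_14
    {V : Type*} [Fintype V] [DecidableEq V]
    (f : V → V → ℝ)
    (hf_nonneg : ∀ p q : V, 0 ≤ f p q)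
    (hf_zero : ∀ p q : V, f p q = 0 ↔ p = q)
    (hf_symm : ∀ p q : V, f p q = f q p)
    (ζ : ℝ) (hζ : 1 ≤ ζ)
    (hmetricity : ∀ x y z : V, f x y ^ (1/ζ) ≤ f x z ^ (1/ζ) + f z y ^ (1/ζ))
    (sv rv : V) (W : Finset V)
    (hW : ∀ w ∈ W, 2 * f sv rv ^ (1/ζ) ≤ f w sv ^ (1/ζ) ∧ w ≠ sv) :
    ∑ w ∈ W, 1 / f w rv ≤ (2 : ℝ) ^ ζ * ∑ w ∈ W, 1 / f w sv := by
  have hζ0 : (0:ℝ) < ζ := lt_of_lt_of_le one_pos hζ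
  rw [Finset.mul_sum]
  apply Finset.sum_le_sum
  intro w hw
  obtain ⟨h2, hne⟩ := hW w hw
  set a := f w sv ^ (1/ζ) with ha
  set b := f w rv ^ (1/ζ) with hb
  have hfs : 0 < f w sv := lt_of_le_of_ne (hf_nonneg w sv) (fun h => hne ((hf_zero w sv).mp h.symm))
  have ha0 : 0 < a := Real.rpow_pos_of_pos hfs _
  have hc0 : 0 ≤ f sv rv ^ (1/ζ) := Real.rpow_nonneg (hf_nonneg sv rv) _
  -- triangle: a ≤ b + d(rv,sv)
  have htri : a ≤ b + f sv rv ^ (1/ζ) := by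
    have := hmetricity w sv rv
    rwa [hf_symm rv sv] at this
  have hba : a / 2 ≤ b := by nlinarith
  have hb0 : 0 < b := lt_of_lt_of_le (by positivity) hba
  -- f w rv = b ^ ζ ≥ (a/2)^ζ = f w sv / 2^ζ
  have hfw : f w rv = b ^ ζ := by
    rw [hb, ← Real.rpow_mul (hf_nonneg w rv), one_div, inv_mul_cancel₀ (ne_of_gt hζ0),
      Real.rpow_one]
  have hfa : f w sv = a ^ ζ := by
    rw [ha, ← Real.rpow_mul (hf_nonneg w sv), one_div, inv_mul_cancel₀ (ne_of_gt hζ0),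
      Real.rpow_one]
  have hkey : f w sv / 2 ^ ζ ≤ f w rv := by
    rw [hfw, hfa]
    have h1 : (a/2) ^ ζ ≤ b ^ ζ :=
      Real.rpow_le_rpow (by positivity) hba (le_of_lt hζ0)
    calc a ^ ζ / 2 ^ ζ = (a/2) ^ ζ := by
          rw [Real.div_rpow (le_of_lt ha0) (by norm_num)]
      _ ≤ b ^ ζ := h1
  have h2ζ : (0:ℝ) < 2 ^ ζ := Real.rpow_pos_of_pos two_pos _
  have hfr : 0 < f w rv := lt_of_lt_of_le (by positivity) hkey
  rw [div_le_iff₀ h2ζ] at hkey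
  rw [mul_one_div, div_le_div_iff₀ hfr hfs]
  nlinarith
end

section
/- Let G be a graph on vertex set {1,…,n} with n ≥ 2. Define n links l_1,…,l_n with decays f(s_i, r_i) = 1 for all i, and for i ≠ j: f(s_j, r_i) = 1/2 if {i,j} is an edge of G, and f(s_j, r_i) = n if {i,j} is not an edge. With SINR threshold β = 1 and zero noise, for every S ⊆ {1,…,n}: (a) if S is independent in G, then S is feasible under uniform power, since for each i ∈ S the in-affectance is Σ_{j ∈ S, j ≠ i} 1/n = (|S|−1)/n ≤ 1; and (b) if S contains two adjacent vertices i, j, then for every power assignment P : S → ℝ_{>0} at least one of the two mutual affectances (P_j/f(s_j,r_i))/(P_i/f(s_i,r_i)) and (P_i/f(s_i,r_j))/(P_j/f(s_j,r_j)) exceeds 1, so S is infeasible under every power assignment. Hence feasible sets of links are in one-to-one correspondence with independent sets of G. -/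
/-- **Correctness of the equi-decay independent-set reduction.**
Let `G` be a graph on `{1,…,n}`, `n ≥ 2`, and define decays `F j i` (from sender `s_j`
to receiver `r_i`) by `F i i = 1`, `F j i = 1/2` if `{i,j} ∈ E(G)`, and `F j i = n`
otherwise.  With threshold `β = 1` and zero noise: (a) independent sets are feasible
under uniform power (the in-affectance being `(|S|−1)/n ≤ 1`); (b) if `i, j ∈ S` are
adjacent, then for every positive power assignment one of the two mutual affectances
exceeds `1`, and some link of `S` has in-affectance `> 1`; hence `S` is feasible under
some positive power assignment iff `S` is independent in `G`. -/
theorem stmt_16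
    (n : ℕ) (hn : 2 ≤ n) (G : SimpleGraph (Fin n)) [DecidableRel G.Adj]
    (F : Fin n → Fin n → ℝ)
    (hF : ∀ j i : Fin n, F j i =
      if j = i then 1 else if G.Adj j i then 1/2 else (n : ℝ)) :
    ∀ S : Finset (Fin n),
      ((∀ i ∈ S, ∀ j ∈ S, i ≠ j → ¬ G.Adj i j) →
        ∀ i ∈ S, (∑ j ∈ S.erase i, F i i / F j i) = ((S.card : ℝ) - 1) / n ∧
                 (∑ j ∈ S.erase i, F i i / F j i) ≤ 1) ∧
      (∀ i ∈ S, ∀ j ∈ S, G.Adj i j →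
        ∀ P : Fin n → ℝ, (∀ k ∈ S, 0 < P k) →
          (1 < (P j / F j i) / (P i / F i i) ∨ 1 < (P i / F i j) / (P j / F j j)) ∧
          ∃ k ∈ S, 1 < ∑ l ∈ S.erase k, (P l / F l k) / (P k / F k k)) ∧
      ((∃ P : Fin n → ℝ, (∀ k ∈ S, 0 < P k) ∧
          ∀ i ∈ S, ∑ j ∈ S.erase i, (P j / F j i) / (P i / F i i) ≤ 1) ↔
        (∀ i ∈ S, ∀ j ∈ S, i ≠ j → ¬ G.Adj i j)) := by

  have hnpos : (0:ℝ) < n := by exact_mod_cast lt_of_lt_of_le (by norm_num) hn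
  have hFpos : ∀ j i : Fin n, 0 < F j i := by
    intro j i; rw [hF]
    split_ifs <;> [norm_num; norm_num; exact hnpos]
  intro S
  -- part (a)
  have ha : (∀ i ∈ S, ∀ j ∈ S, i ≠ j → ¬ G.Adj i j) →
      ∀ i ∈ S, (∑ j ∈ S.erase i, F i i / F j i) = ((S.card : ℝ) - 1) / n ∧
               (∑ j ∈ S.erase i, F i i / F j i) ≤ 1 := by
    intro hind i hi
    have hsum : ∑ j ∈ S.erase i, F i i / F j i = ∑ _j ∈ S.erase i, (1:ℝ)/n := by
      apply Finset.sum_congr rfl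
      intro j hj
      have hjS := Finset.mem_of_mem_erase hj
      have hji : j ≠ i := Finset.ne_of_mem_erase hj
      have hnot : ¬ G.Adj j i := fun h => hind j hjS i hi hji h
      rw [hF i i, hF j i]; simp [hji, hnot]
    have hcard : 1 ≤ S.card := Finset.card_pos.mpr ⟨i, hi⟩
    have heq : ∑ j ∈ S.erase i, F i i / F j i = ((S.card : ℝ) - 1) / n := by
      rw [hsum, Finset.sum_const, nsmul_eq_mul, Finset.card_erase_of_mem hi]
      rw [Nat.cast_sub hcard]
      push_cast; ring
    refine ⟨heq, ?_⟩
    rw [heq]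
    have hle : (S.card : ℝ) ≤ n := by
      exact_mod_cast (S.card_le_univ.trans_eq (by simp))
    rw [div_le_one hnpos]; linarith
  -- part (b)
  have hb : ∀ i ∈ S, ∀ j ∈ S, G.Adj i j →
      ∀ P : Fin n → ℝ, (∀ k ∈ S, 0 < P k) →
        (1 < (P j / F j i) / (P i / F i i) ∨ 1 < (P i / F i j) / (P j / F j j)) ∧
        ∃ k ∈ S, 1 < ∑ l ∈ S.erase k, (P l / F l k) / (P k / F k k) := by
    intro i hi j hj hadj P hP
    have hij : i ≠ j := hadj.ne
    have hFii : F i i = 1 := by rw [hF]; simp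
    have hFjj : F j j = 1 := by rw [hF]; simp
    have hFji : F j i = 1/2 := by rw [hF]; simp [hij.symm, hadj.symm]
    have hFij : F i j = 1/2 := by rw [hF]; simp [hij, hadj]
    have hPi := hP i hi
    have hPj := hP j hj
    have hnonneg : ∀ k ∈ S, ∀ l ∈ S.erase k, 0 ≤ (P l / F l k) / (P k / F k k) := by
      intro k hk l hl
      have hlS := Finset.mem_of_mem_erase hl
      have := hP l hlS; have := hP k hk
      have := hFpos l k; have := hFpos k k
      positivity
    have hdisj : 1 < (P j / F j i) / (P i / F i i) ∨ 1 < (P i / F i j) / (P j / F j j) := by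
      rw [hFii, hFjj, hFji, hFij]
      by_contra hcon
      push_neg at hcon
      obtain ⟨h1, h2⟩ := hcon
      rw [div_le_one (by positivity)] at h1 h2
      nlinarith
    refine ⟨hdisj, ?_⟩
    rcases hdisj with h | h
    · refine ⟨i, hi, lt_of_lt_of_le h ?_⟩
      exact Finset.single_le_sum (hnonneg i hi) (Finset.mem_erase.mpr ⟨hij.symm, hj⟩)
    · refine ⟨j, hj, lt_of_lt_of_le h ?_⟩
      exact Finset.single_le_sum (hnonneg j hj) (Finset.mem_erase.mpr ⟨hij, hi⟩)
  refine ⟨ha, hb, ?_, ?_⟩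
  · rintro ⟨P, hP, hfeas⟩ i hi j hj hij hadj
    obtain ⟨-, k, hk, hgt⟩ := hb i hi j hj hadj P hP
    exact absurd (hfeas k hk) (not_le.mpr hgt)
  · intro hind
    refine ⟨fun _ => 1, fun k _ => one_pos, fun i hi => ?_⟩
    have hsum : ∑ j ∈ S.erase i, ((1:ℝ) / F j i) / (1 / F i i)
        = ∑ j ∈ S.erase i, F i i / F j i := by
      apply Finset.sum_congr rfl
      intro j hj
      rw [one_div, one_div, div_inv_eq_mul, inv_mul_eq_div]
    rw [hsum]
    exact (ha hind i hi).2
end
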